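/- arXiv:2207.00373 — 3 statements merged into one kernel-verified Lean document; each statement's English description precedes it below -/
import Mathlib

section
/- Consider linear dynamics f(x,u) = Ax + Bu and convex stage costs ℓ₁ and ℓ₂ : ℝⁿ × ℝᵐ → ℝ, where at least one of ℓ₁, ℓ₂ is strictly convex. Assume the constraint set Y = {(x,u) : g(x,u) ≤ 0 componentwise} with g convex is convex and compact, that for each μ ∈ (0,1) the problem min_{(x,u)∈Y} ℓ_μ(x,u) subject to x − Ax − Bu = 0 has a global minimum (xᵉ_μ,uᵉ_μ), where ℓ_μ = μℓ₁ + (1−μ)ℓ₂, and that the Slater condition holds: there exists (x̂,û) with g(x̂,û) < 0 componentwise and x̂ − Ax̂ − Bû = 0. Then the system is strictly dissipative at the optimal equilibrium (xᵉ_μ,uᵉ_μ) for the cost function ℓ_μ for all μ ∈ (0,1). -/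
open Set Bornology Matrix Filter

/-- `Vec n` is `ℝⁿ`. -/
abbrev Vec (n : ℕ) : Type := Fin n → ℝ

/-- A class `K∞` comparison function. -/
def KInf (α : ℝ → ℝ) : Prop :=
  ContinuousOn α (Ici 0) ∧ StrictMonoOn α (Ici 0) ∧ α 0 = 0 ∧
  (∀ r ∈ Ici (0 : ℝ), 0 ≤ α r) ∧ ∀ M : ℝ, ∃ r ∈ Ici (0 : ℝ), M < α r

/-- The induced state constraint set `X = {x | ∃ u, (x,u) ∈ Y}`. -/
def stateSet {n m : ℕ} (Y : Set (Vec n × Vec m)) : Set (Vec n) := {x | ∃ u, (x, u) ∈ Y}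

/-- `lam` is bounded on bounded subsets of `X`. -/
def BddOnBddSubsets {n : ℕ} (X : Set (Vec n)) (lam : Vec n → ℝ) : Prop :=
  ∀ S ⊆ X, IsBounded S → IsBounded (lam '' S)

/-- The strict dissipation inequality with supply rate `ℓ(x,u) - ℓ(xᵉ,uᵉ)`. -/
def DissIneq {n m : ℕ} (f : Vec n × Vec m → Vec n) (Y : Set (Vec n × Vec m))
    (ℓ : Vec n × Vec m → ℝ) (xe : Vec n) (ue : Vec m) (lam : Vec n → ℝ) (α : ℝ → ℝ) : Prop :=
  ∀ z ∈ Y, f z ∈ stateSet Y →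
    ℓ z - ℓ (xe, ue) + lam z.1 - lam (f z) ≥ α ‖z.1 - xe‖

/-- Strict pre-dissipativity with a given storage function and `K∞` bound. -/
def StrictPreDissipativeWith {n m : ℕ} (f : Vec n × Vec m → Vec n) (Y : Set (Vec n × Vec m))
    (ℓ : Vec n × Vec m → ℝ) (xe : Vec n) (ue : Vec m) (lam : Vec n → ℝ) (α : ℝ → ℝ) : Prop :=
  (xe, ue) ∈ Y ∧ f (xe, ue) = xe ∧ BddOnBddSubsets (stateSet Y) lam ∧ KInf α ∧
    DissIneq f Y ℓ xe ue lam α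

/-- Strict dissipativity with a given storage function and `K∞` bound. -/
def StrictDissipativeWith {n m : ℕ} (f : Vec n × Vec m → Vec n) (Y : Set (Vec n × Vec m))
    (ℓ : Vec n × Vec m → ℝ) (xe : Vec n) (ue : Vec m) (lam : Vec n → ℝ) (α : ℝ → ℝ) : Prop :=
  StrictPreDissipativeWith f Y ℓ xe ue lam α ∧ BddBelow (lam '' stateSet Y)

/-- Strict dissipativity at an equilibrium. -/
def StrictDissipative {n m : ℕ} (f : Vec n × Vec m → Vec n) (Y : Set (Vec n × Vec m))
    (ℓ : Vec n × Vec m → ℝ) (xe : Vec n) (ue : Vec m) : Prop :=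
  ∃ lam α, StrictDissipativeWith f Y ℓ xe ue lam α

open Topology

/-!
Slater's condition yields a Lagrange multiplier `Λ` for the steady-state constraint
`x = f (x, u)` at the optimal equilibrium `e = (xᵉ, uᵉ)`: separate `(0, ℓ e)` from the image of
the strict epigraph of `ℓ` under `(z, t) ↦ (z.1 - f z, t)`; the Slater point puts a vertical ray
into the interior of that image, so the separating functional is not vertical. The rotated cost
`ℓ z - ℓ e + Λ (z.1 - f z)` is then nonnegative on `Y` and, being strictly convex, vanishes only
at `e`. A continuous function on a compact set that is positive wherever `‖x - xᵉ‖ > 0` dominates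
a `K∞` function of `‖x - xᵉ‖`, and the linear functional `Λ` is the storage function.
-/
theorem StrictConvexOn.smul {E : Type*} [AddCommMonoid E] [Module ℝ E] {s : Set E} {f : E → ℝ}
    {c : ℝ} (hc : 0 < c) (hf : StrictConvexOn ℝ s f) : StrictConvexOn ℝ s fun x => c • f x :=
  ⟨hf.1, fun _ hx _ hy hxy _ _ ha hb hab => by
    simpa only [smul_eq_mul, mul_add, mul_left_comm c] using
      mul_lt_mul_of_pos_left (hf.2 hx hy hxy ha hb hab) hc⟩

theorem strictConvexOn_mul_add_one_sub_mul {E : Type*} [AddCommMonoid E] [Module ℝ E]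
    {s : Set E} {f g : E → ℝ} {μ : ℝ} (hμ : μ ∈ Ioo (0 : ℝ) 1) (hf : ConvexOn ℝ s f)
    (hg : ConvexOn ℝ s g) (hstrict : StrictConvexOn ℝ s f ∨ StrictConvexOn ℝ s g) :
    StrictConvexOn ℝ s fun z => μ * f z + (1 - μ) * g z := by
  have hμ' : 0 < 1 - μ := sub_pos.mpr hμ.2
  rcases hstrict with hf' | hg'
  · exact (hf'.smul hμ.1).add_convexOn (hg.smul hμ'.le)
  · exact (hf.smul hμ.1.le).add_strictConvexOn (hg'.smul hμ')

theorem StrictConvexOn.lt_of_isMinOn {E : Type*} [AddCommMonoid E] [Module ℝ E] {s : Set E}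
    {f : E → ℝ} {x y : E} (hf : StrictConvexOn ℝ s f) (hmin : IsMinOn f s x) (hx : x ∈ s)
    (hy : y ∈ s) (hyx : y ≠ x) : f x < f y :=
  (hmin hy).lt_of_ne fun hxy => hyx <|
    hf.eq_of_isMinOn (isMinOn_iff.mpr fun _ hz => hxy ▸ hmin hz) hmin hy hx

theorem exists_lagrange_multiplier_of_surjective {E V : Type*} [NormedAddCommGroup E]
    [NormedSpace ℝ E] [FiniteDimensional ℝ E] [NormedAddCommGroup V] [NormedSpace ℝ V]
    [FiniteDimensional ℝ V] {H : E →ₗ[ℝ] V} (hH : Function.Surjective H) {Y : Set E}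
    {ℓ : E → ℝ} (hℓ : ConvexOn ℝ Y ℓ) {a : ℝ} (hmin : ∀ z ∈ Y, H z = 0 → a ≤ ℓ z) {zs : E}
    (hzs : zs ∈ interior Y) (hHzs : H zs = 0) :
    ∃ Λ : V →L[ℝ] ℝ, ∀ z ∈ Y, a ≤ ℓ z + Λ (H z) := by
  set S : Set (V × ℝ) := H.prodMap LinearMap.id '' {p : E × ℝ | p.1 ∈ Y ∧ ℓ p.1 < p.2}
  have hS : Convex ℝ S := hℓ.convex_strict_epigraph.linear_image _
  have hS_not : ((0 : V), a) ∉ S := by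
    rintro ⟨⟨z, t⟩, ⟨hz, hzt⟩, hzs⟩
    simp only [LinearMap.prodMap_apply, LinearMap.id_apply, Prod.mk.injEq] at hzs
    linarith [hmin z hz hzs.1, hzs.2]
  set b := ℓ zs + 1
  set U := interior Y ∩ ℓ ⁻¹' Iio b
  have hU : IsOpen U := hℓ.continuousOn_interior.isOpen_inter_preimage isOpen_interior isOpen_Iio
  have hbox : (H '' U) ×ˢ Ioi b ⊆ S := by
    rintro ⟨w, t⟩ ⟨⟨z, ⟨hzY, hzb⟩, rfl⟩, ht⟩
    exact ⟨(z, t), ⟨interior_subset hzY, lt_trans hzb ht⟩, rfl⟩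
  set t₀ := max a b + 1
  -- Slater's point makes `(0, t₀)` an interior point, which forces the multiplier of the cost
  -- to be nonzero.
  have ht₀ : ((0 : V), t₀) ∈ interior S := by
    refine interior_maximal hbox ((H.isOpenMap_of_finiteDimensional hH _ hU).prod isOpen_Ioi)
      ⟨⟨zs, ⟨hzs, by simp [b]⟩, hHzs⟩, ?_⟩
    show b < t₀
    linarith [le_max_right a b]
  obtain ⟨F, hF⟩ := geometric_hahn_banach_open_point hS.interior isOpen_interior
    fun h => hS_not (interior_subset h)
  have hF_le : ∀ q ∈ S, F q ≤ F (0, a) := fun q hq =>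
    closure_minimal (fun x hx => (hF x hx).le) (isClosed_le F.continuous continuous_const)
      ((hS.closure_interior_eq_closure_of_nonempty_interior ⟨_, ht₀⟩).symm ▸ subset_closure hq)
  set c := F (0, 1)
  have hF_apply : ∀ w t, F (w, t) = F (w, 0) + t * c := fun w t => by
    have hwt : (w, t) = (w, 0) + t • ((0 : V), (1 : ℝ)) := by simp
    rw [hwt, map_add, map_smul, smul_eq_mul]
  have hF_zero : ∀ t, F (0, t) = t * c := fun t => by
    simpa only [Prod.mk_zero_zero, map_zero, zero_add] using hF_apply 0 t
  have hc : c < 0 := by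
    have h := hF _ ht₀
    rw [hF_zero, hF_zero] at h
    nlinarith [le_max_left a b]
  refine ⟨c⁻¹ • F.comp (ContinuousLinearMap.inl ℝ V ℝ), fun z hz => ?_⟩
  suffices a - c⁻¹ * F (H z, 0) ≤ ℓ z by simpa using this
  refine le_of_forall_gt_imp_ge_of_dense fun t ht => ?_
  have h := hF_le _ ⟨(z, t), ⟨hz, ht⟩, rfl⟩
  simp only [LinearMap.prodMap_apply, LinearMap.id_apply] at h
  rw [hF_apply, hF_zero] at h
  have hdiv : c⁻¹ * (a * c - t * c) ≤ c⁻¹ * F (H z, 0) :=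
    mul_le_mul_of_nonpos_left (by linarith) (inv_nonpos.mpr hc.le)
  rw [← sub_mul, mul_comm, mul_inv_cancel_right₀ hc.ne] at hdiv
  linarith

theorem exists_lagrange_multiplier {E V : Type*} [NormedAddCommGroup E] [NormedSpace ℝ E]
    [FiniteDimensional ℝ E] [NormedAddCommGroup V] [NormedSpace ℝ V] [FiniteDimensional ℝ V]
    (H : E →ₗ[ℝ] V) {Y : Set E} {ℓ : E → ℝ} (hℓ : ConvexOn ℝ Y ℓ) {a : ℝ}
    (hmin : ∀ z ∈ Y, H z = 0 → a ≤ ℓ z) {zs : E} (hzs : zs ∈ interior Y) (hHzs : H zs = 0) :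
    ∃ Λ : V →L[ℝ] ℝ, ∀ z ∈ Y, a ≤ ℓ z + Λ (H z) := by
  obtain ⟨Λ₀, hΛ₀⟩ := exists_lagrange_multiplier_of_surjective H.surjective_rangeRestrict hℓ
    (fun z hz hHz => hmin z hz (by simpa using congrArg Subtype.val hHz)) hzs
    (Subtype.ext hHzs)
  obtain ⟨Λ, hΛ, -⟩ := exists_extension_norm_eq (LinearMap.range H) Λ₀
  refine ⟨Λ, fun z hz => (hΛ₀ z hz).trans_eq ?_⟩
  rw [← hΛ]
  rfl

theorem mem_interior_setOf_forall_nonpos {X ι : Type*} [TopologicalSpace X] [Finite ι]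
    {g : X → ι → ℝ} (hg : ∀ i, Continuous fun z => g z i) {z : X} (hz : ∀ i, g z i < 0) :
    z ∈ interior {z | ∀ i, g z i ≤ 0} := by
  have hopen : IsOpen {y | ∀ i, g y i < 0} := by
    simpa only [ofPred_forall] using
      isOpen_iInter_of_finite fun i => isOpen_lt (hg i) continuous_const
  exact interior_maximal (fun y hy i => (hy i).le) hopen hz

theorem tendsto_div_one_add_atTop : Tendsto (fun r : ℝ => r / (1 + r)) atTop (𝓝 1) := by
  have h : Tendsto (fun r : ℝ => 1 - (1 + r)⁻¹) atTop (𝓝 (1 - 0)) := tendsto_const_nhds.sub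
    (tendsto_inv_atTop_zero.comp (tendsto_atTop_add_const_left _ 1 tendsto_id))
  rw [sub_zero] at h
  refine h.congr' ((eventually_gt_atTop 0).mono fun r hr => ?_)
  field_simp
  ring

theorem kInf_mul_div_one_add {γ : ℝ → ℝ} (hcont : ContinuousOn γ (Ici 0))
    (hmono : MonotoneOn γ (Ici 0)) (hpos : ∀ r, 0 < r → 0 < γ r) (hγ : Tendsto γ atTop atTop) :
    KInf fun r => γ r * (r / (1 + r)) := by
  have hfrac_nonneg : ∀ r : ℝ, 0 ≤ r → 0 ≤ r / (1 + r) := fun r hr => by positivity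
  have hnonneg : ∀ r ∈ Ici (0 : ℝ), 0 ≤ γ r * (r / (1 + r)) := by
    intro r (hr : 0 ≤ r)
    rcases hr.eq_or_lt with rfl | hr
    · simp
    · exact mul_nonneg (hpos r hr).le (hfrac_nonneg r hr.le)
  refine ⟨?_, ?_, by simp, hnonneg, fun M => ?_⟩
  · exact hcont.mul (continuousOn_id.div (by fun_prop) fun r (hr : 0 ≤ r) => by positivity)
  · intro r (hr : 0 ≤ r) s (hs : 0 ≤ s) hrs
    have hfrac : r / (1 + r) < s / (1 + s) := by
      rw [div_lt_div_iff₀ (by positivity) (by positivity)]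
      linarith
    calc γ r * (r / (1 + r)) ≤ γ s * (r / (1 + r)) :=
          mul_le_mul_of_nonneg_right (hmono hr hs hrs.le) (hfrac_nonneg r hr)
      _ < γ s * (s / (1 + s)) := mul_lt_mul_of_pos_left hfrac (hpos s (hr.trans_lt hrs))
  · obtain ⟨r, hr, hr₀⟩ := ((hγ.atTop_mul_pos one_pos tendsto_div_one_add_atTop).eventually_gt_atTop
      M).and (eventually_ge_atTop 0) |>.exists
    exact ⟨r, hr₀, hr⟩

theorem exists_kInf_le_of_isCompact {X : Type*} [TopologicalSpace X] {K : Set X}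
    (hK : IsCompact K) (hKne : K.Nonempty) {φ d : X → ℝ} (hφ : Continuous φ) (hd : Continuous d)
    (hφ_nonneg : ∀ z ∈ K, 0 ≤ φ z) (hd_nonneg : ∀ z ∈ K, 0 ≤ d z)
    (hφ_pos : ∀ z ∈ K, 0 < d z → 0 < φ z) :
    ∃ α, KInf α ∧ ∀ z ∈ K, α (d z) ≤ φ z := by
  -- `γ r` relaxes `inf {φ z | z ∈ K, r ≤ d z}` to a monotone function that is continuous in `r`.
  set γ : ℝ → ℝ := fun r => sInf ((fun z => φ z + max (r - d z) 0) '' K)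
  have hbdd : ∀ r, BddBelow ((fun z => φ z + max (r - d z) 0) '' K) := fun r =>
    ⟨0, by rintro _ ⟨z, hz, rfl⟩; exact add_nonneg (hφ_nonneg z hz) (le_max_right _ _)⟩
  have hγ_le : ∀ r, ∀ z ∈ K, γ r ≤ φ z + max (r - d z) 0 := fun r z hz =>
    csInf_le (hbdd r) (mem_image_of_mem _ hz)
  have hγ_attained : ∀ r, ∃ z ∈ K, γ r = φ z + max (r - d z) 0 := fun r =>
    ((hK.image (by fun_prop)).sInf_mem (hKne.image _)).imp fun z hz => ⟨hz.1, hz.2.symm⟩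
  have hγ_nonneg : ∀ r, 0 ≤ γ r := fun r => by
    obtain ⟨z, hz, hγz⟩ := hγ_attained r
    exact hγz ▸ add_nonneg (hφ_nonneg z hz) (le_max_right _ _)
  obtain ⟨R, hR⟩ := hK.bddAbove_image hd.continuousOn
  have hγ_ge : ∀ r, r - R ≤ γ r := fun r => by
    obtain ⟨z, hz, hγz⟩ := hγ_attained r
    have := hR (mem_image_of_mem d hz)
    linarith [hφ_nonneg z hz, le_max_left (r - d z) 0]
  have hγ_pos : ∀ r, 0 < r → 0 < γ r := fun r hr => by
    obtain ⟨z, hz, hγz⟩ := hγ_attained r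
    by_contra! h
    have hφz : φ z = 0 := by linarith [hφ_nonneg z hz, le_max_right (r - d z) 0]
    have hdz : r ≤ d z := by linarith [hφ_nonneg z hz, le_max_left (r - d z) 0]
    exact (hφ_pos z hz (hr.trans_le hdz)).ne' hφz
  have hγ_mono : Monotone γ := fun r s hrs => by
    obtain ⟨z, hz, hγz⟩ := hγ_attained s
    calc γ r ≤ φ z + max (r - d z) 0 := hγ_le r z hz
      _ ≤ γ s := by rw [hγz]; gcongr
  have hγ_tendsto : Tendsto γ atTop atTop :=
    tendsto_atTop_mono hγ_ge (tendsto_atTop_add_const_right _ _ tendsto_id)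
  refine ⟨_, kInf_mul_div_one_add (hK.continuous_sInf (by fun_prop)).continuousOn
    (hγ_mono.monotoneOn _) hγ_pos hγ_tendsto, fun z hz => ?_⟩
  have hfrac : d z / (1 + d z) ≤ 1 := by
    rw [div_le_one (by linarith [hd_nonneg z hz])]; linarith
  calc γ (d z) * (d z / (1 + d z)) ≤ γ (d z) := mul_le_of_le_one_right (hγ_nonneg _) hfrac
    _ ≤ φ z + max (d z - d z) 0 := hγ_le _ z hz
    _ = φ z := by simp

theorem strictDissipative_of_linear_storage {n m : ℕ} {f : Vec n × Vec m → Vec n}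
    {Y : Set (Vec n × Vec m)} {ℓ : Vec n × Vec m → ℝ} {xe : Vec n} {ue : Vec m}
    (hY : IsBounded Y) (he : (xe, ue) ∈ Y) (hfe : f (xe, ue) = xe) (Λ : Vec n →L[ℝ] ℝ)
    {α : ℝ → ℝ} (hα : KInf α)
    (hdiss : ∀ z ∈ Y, α ‖z.1 - xe‖ ≤ ℓ z - ℓ (xe, ue) + Λ z.1 - Λ (f z)) :
    StrictDissipative f Y ℓ xe ue := by
  have hX : IsBounded (stateSet Y) :=
    (LipschitzWith.prod_fst.isBounded_image hY).subset fun x ⟨u, hu⟩ => ⟨(x, u), hu, rfl⟩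
  exact ⟨Λ, α, ⟨he, hfe, fun S _ hS => Λ.lipschitz.isBounded_image hS, hα,
    fun z hz _ => hdiss z hz⟩, (Λ.lipschitz.isBounded_image hX).bddBelow⟩

/-- Theorem 3.4: for linear dynamics and convex stage costs `ℓ₁`, `ℓ₂`, at
least one of which is strictly convex, with a convex compact constraint set given by convex
inequalities and the Slater condition, the system is strictly dissipative at the optimal
equilibrium `(xᵉ_μ, uᵉ_μ)` for `ℓ_μ = μ ℓ₁ + (1-μ) ℓ₂` for all `μ ∈ (0,1)`. -/
theorem stmt7 {n m p : ℕ} (A : Matrix (Fin n) (Fin n) ℝ) (B : Matrix (Fin n) (Fin m) ℝ)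
    (f : Vec n × Vec m → Vec n) (hf : f = fun z => A.mulVec z.1 + B.mulVec z.2)
    (g : Vec n × Vec m → Fin p → ℝ) (Y : Set (Vec n × Vec m))
    (hY : Y = {z | ∀ i, g z i ≤ 0})
    (hg : ∀ i, ConvexOn ℝ univ fun z => g z i)
    (hYconv : Convex ℝ Y) (hYcomp : IsCompact Y)
    (ℓ₁ ℓ₂ : Vec n × Vec m → ℝ)
    (hconv₁ : ConvexOn ℝ univ ℓ₁) (hconv₂ : ConvexOn ℝ univ ℓ₂)
    (hstrict : StrictConvexOn ℝ univ ℓ₁ ∨ StrictConvexOn ℝ univ ℓ₂)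
    (xe : ℝ → Vec n) (ue : ℝ → Vec m)
    (hopt : ∀ μ ∈ Ioo (0 : ℝ) 1, (xe μ, ue μ) ∈ Y ∧ f (xe μ, ue μ) = xe μ ∧
      ∀ z ∈ Y, f z = z.1 →
        μ * ℓ₁ (xe μ, ue μ) + (1 - μ) * ℓ₂ (xe μ, ue μ) ≤ μ * ℓ₁ z + (1 - μ) * ℓ₂ z)
    (slater : ∃ z : Vec n × Vec m, (∀ i, g z i < 0) ∧ z.1 - A.mulVec z.1 - B.mulVec z.2 = 0) :
    ∀ μ ∈ Ioo (0 : ℝ) 1,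
      StrictDissipative f Y (fun z => μ * ℓ₁ z + (1 - μ) * ℓ₂ z) (xe μ) (ue μ) := by
  intro μ hμ
  obtain ⟨heY, hfe, hmin⟩ := hopt μ hμ
  set ℓ : Vec n × Vec m → ℝ := fun z => μ * ℓ₁ z + (1 - μ) * ℓ₂ z
  set e : Vec n × Vec m := (xe μ, ue μ)
  have hℓ : StrictConvexOn ℝ univ ℓ := strictConvexOn_mul_add_one_sub_mul hμ hconv₁ hconv₂ hstrict
  set H : (Vec n × Vec m) →ₗ[ℝ] Vec n := LinearMap.fst ℝ _ _ - A.mulVecLin.coprod B.mulVecLin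
  have hH : ∀ z, H z = z.1 - f z := fun z => by simp [H, hf]
  obtain ⟨zs, hzs_neg, hzs_eq⟩ := slater
  have hzs : zs ∈ interior Y := hY ▸ mem_interior_setOf_forall_nonpos
    (fun i => continuousOn_univ.mp ((hg i).continuousOn isOpen_univ)) hzs_neg
  obtain ⟨Λ, hΛ⟩ := exists_lagrange_multiplier H (hℓ.convexOn.subset (subset_univ Y) hYconv)
    (fun z hz hHz => hmin z hz (sub_eq_zero.mp (hH z ▸ hHz)).symm) hzs
    (by simpa [H, sub_sub] using hzs_eq)
  set ρ : Vec n × Vec m → ℝ := fun z => ℓ z + Λ (H z)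
  have hρ : StrictConvexOn ℝ univ ρ := hℓ.add_convexOn ((Λ.toLinearMap ∘ₗ H).convexOn convex_univ)
  have hρe : ρ e = ℓ e := by simp [ρ, hH, e, hfe]
  have hρ_min : IsMinOn ρ Y e := fun z hz => hρe.trans_le (hΛ z hz)
  have hρ_pos : ∀ z ∈ Y, 0 < ‖z.1 - xe μ‖ → 0 < ρ z - ℓ e := fun z hz hd =>
    sub_pos.mpr <| hρe ▸ (hρ.subset (subset_univ Y) hYconv).lt_of_isMinOn hρ_min heY hz
      (by rintro rfl; simp [e] at hd)
  have hρ_cont : Continuous ρ := by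
    have hℓc : Continuous ℓ := continuousOn_univ.mp (hℓ.convexOn.continuousOn isOpen_univ)
    exact hℓc.add (Λ.continuous.comp H.continuous_of_finiteDimensional)
  obtain ⟨α, hα, hαρ⟩ := exists_kInf_le_of_isCompact (φ := fun z => ρ z - ℓ e) hYcomp ⟨e, heY⟩
    (hρ_cont.sub continuous_const) (by fun_prop) (fun z hz => by linarith [hΛ z hz])
    (fun _ _ => norm_nonneg _) hρ_pos
  refine strictDissipative_of_linear_storage hYcomp.isBounded heY hfe Λ hα fun z hz => ?_
  refine (hαρ z hz).trans_eq ?_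
  simp only [ρ, hH, map_sub]
  ring
end

section
/- Let x⁺ = f(x,u) with f : ℝⁿ × ℝᵐ → ℝⁿ twice continuously differentiable, let ℓ₁, ℓ₂ be twice continuously differentiable stage costs for which the system is strictly dissipative at equilibria (x₁ᵉ,u₁ᵉ), (x₂ᵉ,u₂ᵉ) with twice continuously differentiable storage functions λ₁, λ₂, and define the rotated costs ℓ̃ᵢ(x,u) = ℓᵢ(x,u) − ℓᵢ(xᵢᵉ,uᵢᵉ) + λᵢ(x) − λᵢ(f(x,u)). For μ ∈ [0,1] let ℓ_μ = μℓ₁ + (1−μ)ℓ₂, let (xᵉ_μ,uᵉ_μ) be the globally optimal equilibrium for ℓ_μ and assume (xᵉ_μ,uᵉ_μ) lies in the interior of Y, with Lagrange multiplier ν_μ ∈ ℝⁿ, i.e. the gradient with respect to (x,u) of ℓ_μ(x,u) + ν_μᵀ(x − f(x,u)) vanishes at (xᵉ_μ,uᵉ_μ). Set λ̃_μ = ν_μ − μ∇ₓλ₁(xᵉ_μ) − (1−μ)∇ₓλ₂(xᵉ_μ) ∈ ℝⁿ. Assume there exist m₂(μ) > m₁(μ) ≥ 0 such that the Hessian with respect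 to (x,u) of μℓ̃₁ + (1−μ)ℓ̃₂ at (xᵉ_μ,uᵉ_μ) is ≥ m₂(μ)I and the Hessian with respect to (x,u) of (x,u) ↦ λ̃_μᵀf(x,u) at (xᵉ_μ,uᵉ_μ) is ≤ m₁(μ)I, for all μ ∈ [0,1]. Then for every μ ∈ [0,1] the system is locally strictly dissipative for the cost ℓ_μ at (xᵉ_μ,uᵉ_μ) with storage function λ_μ(x) = μλ₁(x) + (1−μ)λ₂(x) + λ̃_μᵀx. -/
/-!
The gradient of the storage function `λ_μ` at `xᵉ_μ` is the Lagrange multiplier `ν_μ`, so at the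
equilibrium the rotated cost `ℓ_μ(z) + λ_μ(z.1) - λ_μ(f z)` has the same (vanishing) derivative as
the Lagrangian. Up to an affine term it equals `μ ℓ̃₁ + (1 - μ) ℓ̃₂ - λ̃_μᵀ f`, so its Hessian there is
at least `(m₂ - m₁) I`. A second-order Taylor argument then gives quadratic growth on a small closed
ball, which is the strict dissipation inequality; the ball is compact, so the continuous storage
function is bounded there.
-/

open Set Bornology Matrix Filter

/-- The Hessian quadratic form of `g` at `z` applied to direction `v`. -/
noncomputable def Hess {E : Type*} [NormedAddCommGroup E] [NormedSpace ℝ E] (g : E → ℝ) (z v : E) : ℝ :=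
  fderiv ℝ (fderiv ℝ g) z v v

open Metric Topology

noncomputable def dotProductCLM {n : ℕ} (w : Vec n) : Vec n →L[ℝ] ℝ :=
  ∑ i, w i • ContinuousLinearMap.proj i

@[simp] lemma dotProductCLM_apply {n : ℕ} (w v : Vec n) : dotProductCLM w v = w ⬝ᵥ v := by
  simp [dotProductCLM, dotProduct]

lemma hasFDerivAt_dotProduct_const {n : ℕ} (w x : Vec n) :
    HasFDerivAt (fun v => w ⬝ᵥ v) (dotProductCLM w) x :=
  (dotProductCLM w).hasFDerivAt.congr_of_eventuallyEq
    (Eventually.of_forall fun v => (dotProductCLM_apply w v).symm)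

lemma hasFDerivAt_dotProductCLM_of_fderiv_apply {n : ℕ} {lam : Vec n → ℝ} {g x : Vec n}
    (hlam : DifferentiableAt ℝ lam x) (hg : ∀ v, fderiv ℝ lam x v = g ⬝ᵥ v) :
    HasFDerivAt lam (dotProductCLM g) x := by
  convert hlam.hasFDerivAt using 1
  ext v
  simp [hg]

lemma hasFDerivAt_lagrangian_of_fderiv_eq_zero {n m : ℕ} {ℓ : Vec n × Vec m → ℝ}
    {f : Vec n × Vec m → Vec n} {ν : Vec n} {z₀ : Vec n × Vec m} (hℓ : DifferentiableAt ℝ ℓ z₀)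
    (hf : DifferentiableAt ℝ f z₀) (hKKT : fderiv ℝ (fun z => ℓ z + ν ⬝ᵥ (z.1 - f z)) z₀ = 0) :
    HasFDerivAt (fun z => ℓ z + dotProductCLM ν (z.1 - f z)) (0 : Vec n × Vec m →L[ℝ] ℝ) z₀ := by
  have hd : DifferentiableAt ℝ (fun z => ℓ z + dotProductCLM ν (z.1 - f z)) z₀ :=
    hℓ.add ((dotProductCLM ν).differentiableAt.comp z₀ (differentiableAt_fst.sub hf))
  simp only [dotProductCLM_apply] at hd ⊢
  exact hKKT ▸ hd.hasFDerivAt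

lemma hasFDerivAt_convex_combination_add_dotProduct {n : ℕ} {lam₁ lam₂ : Vec n → ℝ}
    {g₁ g₂ w t x : Vec n} (μ : ℝ) (h₁ : DifferentiableAt ℝ lam₁ x)
    (h₂ : DifferentiableAt ℝ lam₂ x) (hg₁ : ∀ v, fderiv ℝ lam₁ x v = g₁ ⬝ᵥ v)
    (hg₂ : ∀ v, fderiv ℝ lam₂ x v = g₂ ⬝ᵥ v) (ht : t = w - μ • g₁ - (1 - μ) • g₂) :
    HasFDerivAt (fun y => μ * lam₁ y + (1 - μ) * lam₂ y + t ⬝ᵥ y) (dotProductCLM w) x := by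
  refine ((((hasFDerivAt_dotProductCLM_of_fderiv_apply h₁ hg₁).const_mul μ).add
    ((hasFDerivAt_dotProductCLM_of_fderiv_apply h₂ hg₂).const_mul (1 - μ))).add
    (hasFDerivAt_dotProduct_const t x)).congr_fderiv (ContinuousLinearMap.ext fun v => ?_)
  simp only [FunLike.coe_add, FunLike.coe_smul, Pi.add_apply, Pi.smul_apply,
    dotProductCLM_apply, ht, sub_dotProduct, smul_dotProduct, smul_eq_mul]
  ring

lemma monotoneOn_Icc_of_hasDerivAt_nonneg {g g' : ℝ → ℝ} {a b : ℝ}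
    (hg : ∀ t, HasDerivAt g (g' t) t) (hg' : ∀ t ∈ Icc a b, 0 ≤ g' t) :
    MonotoneOn g (Icc a b) :=
  monotoneOn_of_hasDerivWithinAt_nonneg (convex_Icc a b)
    (fun t _ => (hg t).continuousAt.continuousWithinAt)
    (fun t _ => (hg t).hasDerivWithinAt)
    (fun t ht => hg' t (interior_subset ht))

lemma half_le_sub_of_le_deriv2 {φ φ' φ'' : ℝ → ℝ} {c : ℝ}
    (hφ : ∀ t, HasDerivAt φ (φ' t) t) (hφ' : ∀ t, HasDerivAt φ' (φ'' t) t)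
    (h0 : φ' 0 = 0) (hc : ∀ t ∈ Icc (0 : ℝ) 1, c ≤ φ'' t) : c / 2 ≤ φ 1 - φ 0 := by
  have hslope : MonotoneOn (fun t => φ' t - c * t) (Icc 0 1) :=
    monotoneOn_Icc_of_hasDerivAt_nonneg
      (fun t => (hφ' t).sub (by simpa using (hasDerivAt_id t).const_mul c))
      (fun t ht => sub_nonneg.mpr (hc t ht))
  have hgap : MonotoneOn (fun t => φ t - c / 2 * t ^ 2) (Icc 0 1) := by
    refine monotoneOn_Icc_of_hasDerivAt_nonneg (g' := fun t => φ' t - c * t)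
      (fun t => (hφ t).sub ?_) fun t ht => ?_
    · exact ((hasDerivAt_pow 2 t).const_mul (c / 2)).congr_deriv (by push_cast; ring)
    · simpa [h0] using hslope (left_mem_Icc.mpr zero_le_one) ht ht.1
  have := hgap (left_mem_Icc.mpr zero_le_one) (right_mem_Icc.mpr zero_le_one) zero_le_one
  simp only at this
  linarith

lemma quadratic_growth_of_fderiv_eq_zero {E : Type*} [NormedAddCommGroup E] [NormedSpace ℝ E]
    {L : E → ℝ} (hL : ContDiff ℝ 2 L) {e : E} {δ : ℝ} (hδ : 0 < δ) (hDL : fderiv ℝ L e = 0)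
    (hD2L : ∀ v, δ * ‖v‖ ^ 2 ≤ fderiv ℝ (fderiv ℝ L) e v v) :
    ∀ᶠ z in 𝓝 e, δ / 4 * ‖z - e‖ ^ 2 ≤ L z - L e := by
  have hDL' : ContDiff ℝ 1 (fderiv ℝ L) := hL.fderiv_right (by norm_num)
  have hnear : ∀ᶠ z in 𝓝 e, ‖fderiv ℝ (fderiv ℝ L) z - fderiv ℝ (fderiv ℝ L) e‖ < δ / 2 := by
    have := (hDL'.continuous_fderiv one_ne_zero).continuousAt (x := e)
    exact (tendsto_iff_norm_sub_tendsto_zero.mp this).eventually (gt_mem_nhds (by linarith))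
  obtain ⟨r, hr, hball⟩ := Metric.eventually_nhds_iff_ball.mp hnear
  filter_upwards [ball_mem_nhds e hr] with z hz
  set h := z - e
  have hseg : ∀ t ∈ Icc (0 : ℝ) 1, e + t • h ∈ ball e r := by
    intro t ht
    rw [mem_ball_iff_norm, add_sub_cancel_left, norm_smul, Real.norm_of_nonneg ht.1]
    exact lt_of_le_of_lt (mul_le_of_le_one_left (norm_nonneg h) ht.2) (mem_ball_iff_norm.mp hz)
  have hline : ∀ t : ℝ, HasDerivAt (fun t : ℝ => e + t • h) h t := fun t => by
    simpa using ((hasDerivAt_id t).smul_const h).const_add e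
  -- along `t ↦ e + t • h` the second derivative stays `≥ δ / 2 * ‖h‖ ^ 2` by continuity of `D²L`
  have key := half_le_sub_of_le_deriv2 (φ := fun t => L (e + t • h))
    (φ' := fun t => fderiv ℝ L (e + t • h) h)
    (φ'' := fun t => fderiv ℝ (fderiv ℝ L) (e + t • h) h h) (c := δ / 2 * ‖h‖ ^ 2)
    (fun t => ((hL.differentiable two_ne_zero _).hasFDerivAt).comp_hasDerivAt t (hline t))
    (fun t => by
      simpa using (((hDL'.differentiable one_ne_zero _).hasFDerivAt).comp_hasDerivAt t
        (hline t)).clm_apply (hasDerivAt_const t h))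
    (by simp [hDL]) ?_
  · simp only [one_smul, zero_smul, add_zero, show e + h = z from add_sub_cancel e z] at key
    linarith
  intro t ht
  set B := fderiv ℝ (fderiv ℝ L) (e + t • h) - fderiv ℝ (fderiv ℝ L) e
  have hB : |B h h| ≤ δ / 2 * ‖h‖ ^ 2 := calc
    |B h h| ≤ ‖B‖ * ‖h‖ * ‖h‖ := B.le_opNorm₂ h h
    _ ≤ δ / 2 * ‖h‖ * ‖h‖ := by gcongr; exact (hball _ (hseg t ht)).le
    _ = δ / 2 * ‖h‖ ^ 2 := by ring
  have : fderiv ℝ (fderiv ℝ L) (e + t • h) h h = fderiv ℝ (fderiv ℝ L) e h h + B h h := by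
    simp [B]
  rw [this]
  linarith [hD2L h, neg_abs_le (B h h)]

section RotatedCost

variable {E F : Type*}

def rotatedCost (f : E × F → E) (ℓ : E × F → ℝ) (lam : E → ℝ) (z : E × F) : ℝ :=
  ℓ z + lam z.1 - lam (f z)

lemma rotatedCost_sub_rotatedCost_of_eq {f : E × F → E} {ℓ : E × F → ℝ} {lam : E → ℝ}
    {z₀ : E × F} (hz₀ : f z₀ = z₀.1) (z : E × F) :
    rotatedCost f ℓ lam z - rotatedCost f ℓ lam z₀ = ℓ z - ℓ z₀ + lam z.1 - lam (f z) := by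
  simp only [rotatedCost, hz₀]
  ring

variable [NormedAddCommGroup E] [NormedSpace ℝ E] [NormedAddCommGroup F] [NormedSpace ℝ F]

lemma ContDiff.rotatedCost {k : WithTop ℕ∞} {f : E × F → E} {ℓ : E × F → ℝ} {lam : E → ℝ}
    (hf : ContDiff ℝ k f) (hℓ : ContDiff ℝ k ℓ) (hlam : ContDiff ℝ k lam) :
    ContDiff ℝ k (rotatedCost f ℓ lam) :=
  (hℓ.add (hlam.comp contDiff_fst)).sub (hlam.comp hf)

lemma hasFDerivAt_rotatedCost_of_hasFDerivAt_lagrangian {f : E × F → E} {ℓ : E × F → ℝ}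
    {lam : E → ℝ} {p : E →L[ℝ] ℝ} {z₀ : E × F} (hf : DifferentiableAt ℝ f z₀)
    (hz₀ : f z₀ = z₀.1) (hlam : HasFDerivAt lam p z₀.1)
    (hKKT : HasFDerivAt (fun z => ℓ z + p (z.1 - f z)) (0 : E × F →L[ℝ] ℝ) z₀) :
    HasFDerivAt (rotatedCost f ℓ lam) (0 : E × F →L[ℝ] ℝ) z₀ := by
  have hlamf : HasFDerivAt (fun z => lam (f z)) (p.comp (fderiv ℝ f z₀)) z₀ :=
    (show HasFDerivAt lam p (f z₀) by rwa [hz₀]).comp z₀ hf.hasFDerivAt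
  have hfst : HasFDerivAt (Prod.fst : E × F → E) (ContinuousLinearMap.fst ℝ E F) z₀ :=
    hasFDerivAt_fst
  -- `lam z.1 - lam (f z) - p (z.1 - f z)` is flat at the equilibrium.
  have hcorr := ((hlam.comp z₀ hfst).sub hlamf).sub
    (p.hasFDerivAt.comp z₀ (hfst.sub hf.hasFDerivAt))
  have hsum := hKKT.add hcorr
  rw [p.comp_sub, sub_self, add_zero] at hsum
  refine hsum.congr_of_eventuallyEq (Eventually.of_forall fun z => ?_)
  simp only [rotatedCost, Pi.add_apply, Pi.sub_apply, Function.comp_apply]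
  ring

end RotatedCost

lemma Hess_eq_sub_of_eq_add_clm_sub_add_const {E : Type*} [NormedAddCommGroup E]
    [NormedSpace ℝ E] {L g h : E → ℝ} (hg : ContDiff ℝ 2 g) (hh : ContDiff ℝ 2 h)
    (p : E →L[ℝ] ℝ) (c : ℝ) (hL : ∀ y, L y = g y + p y - h y + c) (z v : E) :
    Hess L z v = Hess g z v - Hess h z v := by
  have hD : fderiv ℝ L = fun y => fderiv ℝ g y + p - fderiv ℝ h y :=
    funext fun y => (((((hg.differentiable two_ne_zero y).hasFDerivAt.add p.hasFDerivAt).sub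
      (hh.differentiable two_ne_zero y).hasFDerivAt).add_const c).congr_of_eventuallyEq
      (Eventually.of_forall hL)).fderiv
  have hdiff : ∀ {k : E → ℝ}, ContDiff ℝ 2 k → DifferentiableAt ℝ (fderiv ℝ k) z := fun hk =>
    (hk.fderiv_right (by norm_num)).differentiable one_ne_zero z
  have hD2 : HasFDerivAt (fun y => fderiv ℝ g y + p - fderiv ℝ h y)
      (fderiv ℝ (fderiv ℝ g) z - fderiv ℝ (fderiv ℝ h) z) z :=
    ((hdiff hg).hasFDerivAt.add_const p).sub (hdiff hh).hasFDerivAt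
  rw [Hess, Hess, Hess, hD, hD2.fderiv]
  rfl

lemma Hess_rotatedCost_convex_combination {n m : ℕ} {f : Vec n × Vec m → Vec n}
    {ℓ₁ ℓ₂ lt₁ lt₂ : Vec n × Vec m → ℝ} {lam₁ lam₂ : Vec n → ℝ} (hf : ContDiff ℝ 2 f)
    (hℓ₁ : ContDiff ℝ 2 ℓ₁) (hℓ₂ : ContDiff ℝ 2 ℓ₂) (hlam₁ : ContDiff ℝ 2 lam₁)
    (hlam₂ : ContDiff ℝ 2 lam₂) {c₁ c₂ : ℝ}
    (hlt₁ : lt₁ = fun z => ℓ₁ z - c₁ + lam₁ z.1 - lam₁ (f z))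
    (hlt₂ : lt₂ = fun z => ℓ₂ z - c₂ + lam₂ z.1 - lam₂ (f z)) (μ : ℝ) (t : Vec n)
    (z v : Vec n × Vec m) :
    Hess (rotatedCost f (fun z => μ * ℓ₁ z + (1 - μ) * ℓ₂ z)
        (fun x => μ * lam₁ x + (1 - μ) * lam₂ x + t ⬝ᵥ x)) z v =
      Hess (fun z => μ * lt₁ z + (1 - μ) * lt₂ z) z v - Hess (fun z => t ⬝ᵥ f z) z v := by
  subst hlt₁ hlt₂
  refine Hess_eq_sub_of_eq_add_clm_sub_add_const (by fun_prop) (by unfold dotProduct; fun_prop)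
    ((dotProductCLM t).comp (ContinuousLinearMap.fst ℝ (Vec n) (Vec m)))
    (μ * c₁ + (1 - μ) * c₂) (fun y => ?_) z v
  simp only [rotatedCost, ContinuousLinearMap.comp_apply, ContinuousLinearMap.coe_fst',
    dotProductCLM_apply]
  ring

lemma kInf_const_mul_sq {c : ℝ} (hc : 0 < c) : KInf (fun s => c * s ^ 2) := by
  refine ⟨by fun_prop, fun x hx y hy hxy => ?_, by simp, fun s _ => by positivity, fun M => ?_⟩
  · have : x ^ 2 < y ^ 2 := pow_lt_pow_left₀ hxy hx two_ne_zero
    exact mul_lt_mul_of_pos_left this hc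
  · refine ⟨Real.sqrt ((|M| + 1) / c), Real.sqrt_nonneg _, ?_⟩
    show M < c * _ ^ 2
    rw [Real.sq_sqrt (by positivity), mul_div_cancel₀ _ hc.ne']
    linarith [le_abs_self M]

lemma strictDissipativeWith_closedBall {n m : ℕ} {f : Vec n × Vec m → Vec n}
    {ℓ : Vec n × Vec m → ℝ} {xe : Vec n} {ue : Vec m} {lam : Vec n → ℝ} (hlam : Continuous lam)
    (hfe : f (xe, ue) = xe) {r c : ℝ} (hr : 0 ≤ r) (hc : 0 < c)
    (hgrowth : ∀ z ∈ closedBall (xe, ue) r,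
      c * ‖z - (xe, ue)‖ ^ 2 ≤ rotatedCost f ℓ lam z - rotatedCost f ℓ lam (xe, ue)) :
    StrictDissipativeWith f (closedBall (xe, ue) r) ℓ xe ue lam (fun s => c * s ^ 2) := by
  have hX : stateSet (closedBall (xe, ue) r) ⊆ Prod.fst '' closedBall (xe, ue) r :=
    fun x ⟨u, hu⟩ => ⟨(x, u), hu, rfl⟩
  have hcpt : IsCompact (lam '' (Prod.fst '' closedBall (xe, ue) r)) :=
    ((isCompact_closedBall _ _).image continuous_fst).image hlam
  refine ⟨⟨mem_closedBall_self hr, hfe, fun S hS _ => hcpt.isBounded.subset (image_mono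
    (hS.trans hX)), kInf_const_mul_sq hc, fun z hz _ => ?_⟩, hcpt.bddBelow.mono (image_mono hX)⟩
  rw [ge_iff_le, ← rotatedCost_sub_rotatedCost_of_eq hfe]
  calc c * ‖z.1 - xe‖ ^ 2 ≤ c * ‖z - (xe, ue)‖ ^ 2 := by
        gcongr; exact norm_fst_le (z - (xe, ue))
    _ ≤ _ := hgrowth z hz

lemma exists_strictDissipativeWith_closedBall {n m : ℕ} {f : Vec n × Vec m → Vec n}
    {ℓ : Vec n × Vec m → ℝ} {lam : Vec n → ℝ} {xe : Vec n} {ue : Vec m}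
    (hf : ContDiff ℝ 2 f) (hℓ : ContDiff ℝ 2 ℓ) (hlam : ContDiff ℝ 2 lam) (hfe : f (xe, ue) = xe)
    {δ : ℝ} (hδ : 0 < δ) (hDL : fderiv ℝ (rotatedCost f ℓ lam) (xe, ue) = 0)
    (hD2L : ∀ v, δ * ‖v‖ ^ 2 ≤ Hess (rotatedCost f ℓ lam) (xe, ue) v) :
    ∃ r > 0, StrictDissipativeWith f (closedBall (xe, ue) r) ℓ xe ue lam (fun s => δ / 4 * s ^ 2) := by
  obtain ⟨r, hr, hgrowth⟩ := nhds_basis_closedBall.eventually_iff.mp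
    (quadratic_growth_of_fderiv_eq_zero (hf.rotatedCost hℓ hlam) hδ hDL hD2L)
  exact ⟨r, hr, strictDissipativeWith_closedBall hlam.continuous hfe hr.le (by positivity) hgrowth⟩

theorem stmt13_general {n m : ℕ} (f : Vec n × Vec m → Vec n) (Y : Set (Vec n × Vec m))
    (hf : ContDiff ℝ 2 f)
    (ℓ₁ ℓ₂ : Vec n × Vec m → ℝ) (hℓ₁ : ContDiff ℝ 2 ℓ₁) (hℓ₂ : ContDiff ℝ 2 ℓ₂)
    (xe₁ : Vec n) (ue₁ : Vec m) (xe₂ : Vec n) (ue₂ : Vec m)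
    (lam₁ lam₂ : Vec n → ℝ) (hlam₁ : ContDiff ℝ 2 lam₁) (hlam₂ : ContDiff ℝ 2 lam₂)
    (lt₁ lt₂ : Vec n × Vec m → ℝ)
    (hlt₁ : lt₁ = fun z => ℓ₁ z - ℓ₁ (xe₁, ue₁) + lam₁ z.1 - lam₁ (f z))
    (hlt₂ : lt₂ = fun z => ℓ₂ z - ℓ₂ (xe₂, ue₂) + lam₂ z.1 - lam₂ (f z))
    (xe : ℝ → Vec n) (ue : ℝ → Vec m)
    (hopt : ∀ μ ∈ Icc (0 : ℝ) 1, (xe μ, ue μ) ∈ Y ∧ f (xe μ, ue μ) = xe μ ∧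
      ∀ z ∈ Y, f z = z.1 →
        μ * ℓ₁ (xe μ, ue μ) + (1 - μ) * ℓ₂ (xe μ, ue μ) ≤ μ * ℓ₁ z + (1 - μ) * ℓ₂ z)
    (ν : ℝ → Vec n)
    (hKKT : ∀ μ ∈ Icc (0 : ℝ) 1,
      fderiv ℝ (fun z : Vec n × Vec m =>
        μ * ℓ₁ z + (1 - μ) * ℓ₂ z + ν μ ⬝ᵥ (z.1 - f z)) (xe μ, ue μ) = 0)
    (grad₁ grad₂ : Vec n → Vec n)
    (hgrad₁ : ∀ x v, fderiv ℝ lam₁ x v = grad₁ x ⬝ᵥ v)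
    (hgrad₂ : ∀ x v, fderiv ℝ lam₂ x v = grad₂ x ⬝ᵥ v)
    (tlam : ℝ → Vec n)
    (htlam : ∀ μ, tlam μ = ν μ - μ • grad₁ (xe μ) - (1 - μ) • grad₂ (xe μ))
    (m₁ m₂ : ℝ → ℝ)
    (hm : ∀ μ ∈ Icc (0 : ℝ) 1, 0 ≤ m₁ μ ∧ m₁ μ < m₂ μ)
    (hH₂ : ∀ μ ∈ Icc (0 : ℝ) 1, ∀ v : Vec n × Vec m,
      m₂ μ * ‖v‖ ^ 2 ≤ Hess (fun z => μ * lt₁ z + (1 - μ) * lt₂ z) (xe μ, ue μ) v)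
    (hH₁ : ∀ μ ∈ Icc (0 : ℝ) 1, ∀ v : Vec n × Vec m,
      Hess (fun z => tlam μ ⬝ᵥ f z) (xe μ, ue μ) v ≤ m₁ μ * ‖v‖ ^ 2) :
    ∀ μ ∈ Icc (0 : ℝ) 1, ∃ N : Set (Vec n × Vec m), N ∈ nhds (xe μ, ue μ) ∧
      ∃ α, StrictDissipativeWith f (closure N) (fun z => μ * ℓ₁ z + (1 - μ) * ℓ₂ z)
        (xe μ) (ue μ) (fun x => μ * lam₁ x + (1 - μ) * lam₂ x + tlam μ ⬝ᵥ x) α := by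
  intro μ hμ
  obtain ⟨-, hfe, -⟩ := hopt μ hμ
  set ℓμ := fun z => μ * ℓ₁ z + (1 - μ) * ℓ₂ z
  set lamμ := fun x => μ * lam₁ x + (1 - μ) * lam₂ x + tlam μ ⬝ᵥ x
  have hℓμ : ContDiff ℝ 2 ℓμ := by fun_prop
  have hlamμ : ContDiff ℝ 2 lamμ := by unfold lamμ dotProduct; fun_prop
  have hDL : fderiv ℝ (rotatedCost f ℓμ lamμ) (xe μ, ue μ) = 0 :=
    (hasFDerivAt_rotatedCost_of_hasFDerivAt_lagrangian (hf.differentiable two_ne_zero _) hfe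
      (hasFDerivAt_convex_combination_add_dotProduct μ (hlam₁.differentiable two_ne_zero _)
        (hlam₂.differentiable two_ne_zero _) (hgrad₁ _) (hgrad₂ _) (htlam μ))
      (hasFDerivAt_lagrangian_of_fderiv_eq_zero (hℓμ.differentiable two_ne_zero _)
        (hf.differentiable two_ne_zero _) (hKKT μ hμ))).fderiv
  have hD2L : ∀ v, (m₂ μ - m₁ μ) * ‖v‖ ^ 2 ≤ Hess (rotatedCost f ℓμ lamμ) (xe μ, ue μ) v :=
    fun v => by
      rw [Hess_rotatedCost_convex_combination hf hℓ₁ hℓ₂ hlam₁ hlam₂ hlt₁ hlt₂]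
      linarith [hH₂ μ hμ v, hH₁ μ hμ v]
  obtain ⟨r, hr, hdiss⟩ := exists_strictDissipativeWith_closedBall hf hℓμ hlamμ hfe
    (sub_pos.mpr (hm μ hμ).2) hDL hD2L
  exact ⟨closedBall (xe μ, ue μ) r, closedBall_mem_nhds _ hr, _, by
    rwa [isClosed_closedBall.closure_eq]⟩

/-- Theorem 4.6: under twice continuous differentiability, strict
dissipativity for `ℓ₁`, `ℓ₂`, optimal equilibria in the interior of `Y` with Lagrange
multipliers `ν_μ`, and the Hessian conditions at the optimal equilibria, the system is locally
strictly dissipative for `ℓ_μ` at `(xᵉ_μ,uᵉ_μ)` for every `μ ∈ [0,1]` with storage function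
`λ_μ(x) = μλ₁(x) + (1-μ)λ₂(x) + λ̃_μᵀx`. -/
theorem stmt13 {n m : ℕ} (f : Vec n × Vec m → Vec n) (Y : Set (Vec n × Vec m))
    (hf : ContDiff ℝ 2 f)
    (ℓ₁ ℓ₂ : Vec n × Vec m → ℝ) (hℓ₁ : ContDiff ℝ 2 ℓ₁) (hℓ₂ : ContDiff ℝ 2 ℓ₂)
    (xe₁ : Vec n) (ue₁ : Vec m) (xe₂ : Vec n) (ue₂ : Vec m)
    (lam₁ lam₂ : Vec n → ℝ) (hlam₁ : ContDiff ℝ 2 lam₁) (hlam₂ : ContDiff ℝ 2 lam₂)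
    (hd₁ : ∃ α, StrictDissipativeWith f Y ℓ₁ xe₁ ue₁ lam₁ α)
    (hd₂ : ∃ α, StrictDissipativeWith f Y ℓ₂ xe₂ ue₂ lam₂ α)
    (lt₁ lt₂ : Vec n × Vec m → ℝ)
    (hlt₁ : lt₁ = fun z => ℓ₁ z - ℓ₁ (xe₁, ue₁) + lam₁ z.1 - lam₁ (f z))
    (hlt₂ : lt₂ = fun z => ℓ₂ z - ℓ₂ (xe₂, ue₂) + lam₂ z.1 - lam₂ (f z))
    (xe : ℝ → Vec n) (ue : ℝ → Vec m)
    (hopt : ∀ μ ∈ Icc (0 : ℝ) 1, (xe μ, ue μ) ∈ Y ∧ f (xe μ, ue μ) = xe μ ∧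
      ∀ z ∈ Y, f z = z.1 →
        μ * ℓ₁ (xe μ, ue μ) + (1 - μ) * ℓ₂ (xe μ, ue μ) ≤ μ * ℓ₁ z + (1 - μ) * ℓ₂ z)
    (hint : ∀ μ ∈ Icc (0 : ℝ) 1, (xe μ, ue μ) ∈ interior Y)
    (ν : ℝ → Vec n)
    (hKKT : ∀ μ ∈ Icc (0 : ℝ) 1,
      fderiv ℝ (fun z : Vec n × Vec m =>
        μ * ℓ₁ z + (1 - μ) * ℓ₂ z + ν μ ⬝ᵥ (z.1 - f z)) (xe μ, ue μ) = 0)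
    (grad₁ grad₂ : Vec n → Vec n)
    (hgrad₁ : ∀ x v, fderiv ℝ lam₁ x v = grad₁ x ⬝ᵥ v)
    (hgrad₂ : ∀ x v, fderiv ℝ lam₂ x v = grad₂ x ⬝ᵥ v)
    (tlam : ℝ → Vec n)
    (htlam : ∀ μ, tlam μ = ν μ - μ • grad₁ (xe μ) - (1 - μ) • grad₂ (xe μ))
    (m₁ m₂ : ℝ → ℝ)
    (hm : ∀ μ ∈ Icc (0 : ℝ) 1, 0 ≤ m₁ μ ∧ m₁ μ < m₂ μ)
    (hH₂ : ∀ μ ∈ Icc (0 : ℝ) 1, ∀ v : Vec n × Vec m,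
      m₂ μ * ‖v‖ ^ 2 ≤ Hess (fun z => μ * lt₁ z + (1 - μ) * lt₂ z) (xe μ, ue μ) v)
    (hH₁ : ∀ μ ∈ Icc (0 : ℝ) 1, ∀ v : Vec n × Vec m,
      Hess (fun z => tlam μ ⬝ᵥ f z) (xe μ, ue μ) v ≤ m₁ μ * ‖v‖ ^ 2) :
    ∀ μ ∈ Icc (0 : ℝ) 1, ∃ N : Set (Vec n × Vec m), N ∈ nhds (xe μ, ue μ) ∧
      ∃ α, StrictDissipativeWith f (closure N) (fun z => μ * ℓ₁ z + (1 - μ) * ℓ₂ z)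
        (xe μ) (ue μ) (fun x => μ * lam₁ x + (1 - μ) * lam₂ x + tlam μ ⬝ᵥ x) α :=
  stmt13_general f Y hf ℓ₁ ℓ₂ hℓ₁ hℓ₂ xe₁ ue₁ xe₂ ue₂ lam₁ lam₂ hlam₁ hlam₂ lt₁ lt₂ hlt₁ hlt₂ xe ue
    hopt ν hKKT grad₁ grad₂ hgrad₁ hgrad₂ tlam htlam m₁ m₂ hm hH₂ hH₁
end

section
/- Let x⁺ = f(x,u) be a discrete-time control system with f continuous and let the constraint set Y ⊆ ℝⁿ × ℝᵐ be convex and compact. Let ℓ : Y → ℝ be a continuous, strictly convex stage cost whose unique global minimiser (x*,u*) over Y is an equilibrium, i.e. f(x*,u*) = x*. Then the system is strictly dissipative for the stage cost ℓ at (x*,u*) with the zero storage function λ ≡ 0, i.e. there exists a class-K∞ function α with ℓ(x,u) − ℓ(x*,u*) ≥ α(‖x − x*‖) for all (x,u) ∈ Y. -/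
open Set Bornology Matrix Filter

/-! On the compact set `Y` the envelope `h r = inf_z (ℓ z - ℓ* + max (r - ‖z.1 - xs‖) 0)` is
continuous (an infimum of a jointly continuous family over a compact set), nondecreasing,
positive for `r > 0` because the minimiser is unique, grows at least like `r - max ‖z.1 - xs‖`,
and satisfies `h ‖z.1 - xs‖ ≤ ℓ z - ℓ*`. Multiplying it by `r / (1 + r)` makes it strictly
increasing while keeping it below `h`. -/

theorem kInf_div_one_add_mul {h : ℝ → ℝ} (hcont : ContinuousOn h (Ici 0))
    (hmono : MonotoneOn h (Ici 0)) (hpos : ∀ r, 0 < r → 0 < h r)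
    (hunbdd : ∀ M, ∃ r ≥ 0, M < h r) :
    KInf fun r => r / (1 + r) * h r := by
  have hnonneg : ∀ r ∈ Ici (0 : ℝ), 0 ≤ r / (1 + r) * h r := by
    intro r hr
    rcases (mem_Ici.1 hr).eq_or_lt with rfl | hr
    · simp
    · exact (mul_pos (by positivity) (hpos r hr)).le
  refine ⟨?_, ?_, by simp, hnonneg, ?_⟩
  · refine ContinuousOn.mul ?_ hcont
    exact continuousOn_id.div (continuousOn_const.add continuousOn_id)
      fun r hr => by linarith [mem_Ici.1 hr]
  · intro a ha b hb hab
    have ha : 0 ≤ a := ha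
    have hfrac : a / (1 + a) < b / (1 + b) := by
      rw [div_lt_div_iff₀ (by linarith) (by linarith)]
      linarith
    calc a / (1 + a) * h a ≤ a / (1 + a) * h b := by
          gcongr
          exact hmono ha hb hab.le
      _ < b / (1 + b) * h b := by
          gcongr
          exact hpos b (ha.trans_lt hab)
  · intro M
    obtain ⟨r, hr, hMr⟩ := hunbdd (2 * M)
    refine ⟨max r 1, by simp, ?_⟩
    have hhalf : (1 : ℝ) / 2 ≤ max r 1 / (1 + max r 1) := by
      rw [div_le_div_iff₀ (by norm_num) (by positivity)]
      linarith [le_max_right r 1]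
    have hle : h r ≤ h (max r 1) := hmono hr (by simp) (le_max_left r 1)
    nlinarith [hpos (max r 1) (by positivity)]

section LowerEnvelope

variable {E : Type*}

noncomputable def lowerEnvelope (γ d : E → ℝ) (r : ℝ) : ℝ :=
  ⨅ z, γ z + max (r - d z) 0

variable {γ d : E → ℝ}

theorem bddBelow_range_lowerEnvelope (hγ : ∀ z, 0 ≤ γ z) (r : ℝ) :
    BddBelow (range fun z => γ z + max (r - d z) 0) :=
  ⟨0, by rintro _ ⟨z, rfl⟩; exact add_nonneg (hγ z) (le_max_right _ _)⟩

theorem lowerEnvelope_apply_le (hγ : ∀ z, 0 ≤ γ z) (z : E) :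
    lowerEnvelope γ d (d z) ≤ γ z := by
  simpa [lowerEnvelope] using ciInf_le (bddBelow_range_lowerEnvelope (d := d) hγ (d z)) z

theorem monotone_lowerEnvelope (hγ : ∀ z, 0 ≤ γ z) : Monotone (lowerEnvelope γ d) :=
  fun _ _ hrs => ciInf_mono (bddBelow_range_lowerEnvelope hγ _) fun _ => by gcongr

theorem continuous_lowerEnvelope [TopologicalSpace E] [CompactSpace E] (hγ : Continuous γ)
    (hd : Continuous d) :
    Continuous (lowerEnvelope γ d) := by
  have := isCompact_univ.continuous_sInf (f := fun r z => γ z + max (r - d z) 0) (by fun_prop)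
  simp only [image_univ] at this
  exact this

theorem lowerEnvelope_pos [TopologicalSpace E] [CompactSpace E] [Nonempty E]
    (hγ : Continuous γ) (hd : Continuous d) (hγ_nonneg : ∀ z, 0 ≤ γ z)
    (hpos : ∀ z, 0 < d z → 0 < γ z) {r : ℝ} (hr : 0 < r) :
    0 < lowerEnvelope γ d r := by
  obtain ⟨z₀, -, hz₀⟩ := isCompact_univ.exists_isMinOn univ_nonempty
    (f := fun z => γ z + max (r - d z) 0) (by fun_prop)
  refine lt_of_lt_of_le ?_ (le_ciInf fun z => hz₀ (mem_univ z))
  by_cases hdz : 0 < d z₀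
  · exact add_pos_of_pos_of_nonneg (hpos z₀ hdz) (le_max_right _ _)
  · exact add_pos_of_nonneg_of_pos (hγ_nonneg z₀) (lt_max_of_lt_left (by linarith))

theorem exists_lt_lowerEnvelope [TopologicalSpace E] [CompactSpace E] [Nonempty E]
    (hd : Continuous d) (hγ : ∀ z, 0 ≤ γ z) (M : ℝ) : ∃ r ≥ 0, M < lowerEnvelope γ d r := by
  obtain ⟨R, hR⟩ := (isCompact_range hd).bddAbove
  refine ⟨max (M + R + 1) 0, le_max_right _ _, ?_⟩
  refine lt_of_lt_of_le ?_ (le_ciInf fun z => ?_ : max (M + R + 1) 0 - R ≤ _)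
  · linarith [le_max_left (M + R + 1) 0]
  · have hdz : d z ≤ R := hR ⟨z, rfl⟩
    linarith [hγ z, le_max_left (max (M + R + 1) 0 - d z) 0]

end LowerEnvelope

theorem exists_kInf_le_of_compactSpace {E : Type*} [TopologicalSpace E] [CompactSpace E]
    [Nonempty E] {γ d : E → ℝ} (hγ : Continuous γ) (hd : Continuous d)
    (hγ_nonneg : ∀ z, 0 ≤ γ z) (hd_nonneg : ∀ z, 0 ≤ d z) (hpos : ∀ z, 0 < d z → 0 < γ z) :
    ∃ α, KInf α ∧ ∀ z, α (d z) ≤ γ z := by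
  refine ⟨fun r => r / (1 + r) * lowerEnvelope γ d r, ?_, fun z => ?_⟩
  · exact kInf_div_one_add_mul (continuous_lowerEnvelope hγ hd).continuousOn
      ((monotone_lowerEnvelope hγ_nonneg).monotoneOn _)
      (fun r hr => lowerEnvelope_pos hγ hd hγ_nonneg hpos hr)
      (exists_lt_lowerEnvelope hd hγ_nonneg)
  · have hfrac : d z / (1 + d z) ≤ 1 := by
      rw [div_le_one (by linarith [hd_nonneg z])]
      linarith
    have henv : 0 ≤ lowerEnvelope γ d (d z) :=
      le_ciInf fun z' => add_nonneg (hγ_nonneg z') (le_max_right _ _)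
    calc d z / (1 + d z) * lowerEnvelope γ d (d z) ≤ lowerEnvelope γ d (d z) :=
          mul_le_of_le_one_left henv hfrac
      _ ≤ γ z := lowerEnvelope_apply_le hγ_nonneg z

theorem strictDissipativeWith_zero {n m : ℕ} {f : Vec n × Vec m → Vec n}
    {Y : Set (Vec n × Vec m)} {ℓ : Vec n × Vec m → ℝ} {xe : Vec n} {ue : Vec m} {α : ℝ → ℝ}
    (hmem : (xe, ue) ∈ Y) (heq : f (xe, ue) = xe) (hα : KInf α)
    (hbound : ∀ z ∈ Y, ℓ z - ℓ (xe, ue) ≥ α ‖z.1 - xe‖) :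
    StrictDissipativeWith f Y ℓ xe ue (fun _ => 0) α :=
  ⟨⟨hmem, heq, fun _ _ _ => isBounded_singleton.subset (image_subset_iff.2 fun _ _ => rfl), hα,
      fun z hz _ => by simpa using hbound z hz⟩,
    ⟨0, by rintro _ ⟨_, _, rfl⟩; rfl⟩⟩

theorem stmt18_general {n m : ℕ} (f : Vec n × Vec m → Vec n)
    (Y : Set (Vec n × Vec m)) (hYcomp : IsCompact Y)
    (ℓ : Vec n × Vec m → ℝ) (hℓcont : ContinuousOn ℓ Y)
    (xs : Vec n) (us : Vec m) (hmem : (xs, us) ∈ Y)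
    (hmin : ∀ z ∈ Y, z ≠ (xs, us) → ℓ (xs, us) < ℓ z)
    (heq : f (xs, us) = xs) :
    ∃ α : ℝ → ℝ, KInf α ∧
      (∀ z ∈ Y, ℓ z - ℓ (xs, us) ≥ α ‖z.1 - xs‖) ∧
      StrictDissipativeWith f Y ℓ xs us (fun _ => 0) α := by
  have : CompactSpace Y := isCompact_iff_compactSpace.mp hYcomp
  have : Nonempty Y := ⟨⟨_, hmem⟩⟩
  have hgap_nonneg : ∀ z : Y, 0 ≤ ℓ z - ℓ (xs, us) := fun ⟨z, hz⟩ => by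
    rcases eq_or_ne z (xs, us) with rfl | hne
    · simp
    · exact sub_nonneg.2 (hmin z hz hne).le
  have hgap_pos : ∀ z : Y, 0 < ‖(z : Vec n × Vec m).1 - xs‖ → 0 < ℓ z - ℓ (xs, us) :=
    fun ⟨z, hz⟩ hdist => sub_pos.2 <| hmin z hz <| by
      rintro rfl
      simp at hdist
  obtain ⟨α, hα, hle⟩ := exists_kInf_le_of_compactSpace (hℓcont.domRestrict.sub continuous_const)
    (by fun_prop) hgap_nonneg (fun _ => norm_nonneg _) hgap_pos
  have hbound : ∀ z ∈ Y, ℓ z - ℓ (xs, us) ≥ α ‖z.1 - xs‖ := fun z hz => hle ⟨z, hz⟩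
  exact ⟨α, hα, hbound, strictDissipativeWith_zero hmem heq hα hbound⟩

/-- remark after Definition 2.3: a continuous, strictly convex stage cost on
a convex compact constraint set whose unique global minimiser is an equilibrium yields strict
dissipativity with the zero storage function. -/
theorem stmt18 {n m : ℕ} (f : Vec n × Vec m → Vec n) (hf : Continuous f)
    (Y : Set (Vec n × Vec m)) (hYconv : Convex ℝ Y) (hYcomp : IsCompact Y)
    (ℓ : Vec n × Vec m → ℝ) (hℓcont : ContinuousOn ℓ Y)
    (hℓconv : StrictConvexOn ℝ Y ℓ)
    (xs : Vec n) (us : Vec m) (hmem : (xs, us) ∈ Y)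
    (hmin : ∀ z ∈ Y, z ≠ (xs, us) → ℓ (xs, us) < ℓ z)
    (heq : f (xs, us) = xs) :
    ∃ α : ℝ → ℝ, KInf α ∧
      (∀ z ∈ Y, ℓ z - ℓ (xs, us) ≥ α ‖z.1 - xs‖) ∧
      StrictDissipativeWith f Y ℓ xs us (fun _ => 0) α :=
  stmt18_general f Y hYcomp ℓ hℓcont xs us hmem hmin heq
end
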